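/- arXiv:1108.0627 — 2 statements merged into one kernel-verified Lean document; each statement's English description precedes it below -/
import Mathlib

section
/- Let B be a compact convex subset of ℝ^m. Then the set of exposed points of B is dense in the set of extreme points of B (Straszewicz's theorem). -/
/-!
An extreme point `x` of `B` does not lie in the convex hull of `B \ ball x ε`, which is compact
in finite dimension, so some linear functional `l` strictly separates `x` from it. Seen from a
point `z` far behind `x` in the direction of `-l`, every point of `B` where `l` is small is nearer
than `x`. Hence the point of `B` farthest from `z`, which is exposed by `⟪y - z, ·⟫`, lies in the
`ε`-ball around `x`.
-/

open Set

open scoped RealInnerProductSpace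

section FiniteDimensional

variable {E : Type*} [NormedAddCommGroup E] [NormedSpace ℝ E] [FiniteDimensional ℝ E]

/-- By Carathéodory, `convexHull ℝ K` is the image of the compact set
`stdSimplex ℝ (Fin (d + 1)) × K ^ (d + 1)` under `(w, p) ↦ ∑ i, w i • p i`, where `d = dim E`;
shorter affinely independent families are padded with zero weights. -/
theorem isCompact_convexHull {K : Set E} (hK : IsCompact K) : IsCompact (convexHull ℝ K) := by
  rcases K.eq_empty_or_nonempty with rfl | ⟨z₀, hz₀⟩
  · simp
  set n := Module.finrank ℝ E + 1
  suffices convexHull ℝ K = (fun p : (Fin n → ℝ) × (Fin n → E) ↦ ∑ i, p.1 i • p.2 i) ''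
      (stdSimplex ℝ (Fin n) ×ˢ univ.pi fun _ ↦ K) by
    rw [this]
    exact ((isCompact_stdSimplex ℝ (Fin n)).prod (isCompact_univ_pi fun _ ↦ hK)).image
      (by fun_prop)
  refine Subset.antisymm (fun x hx ↦ ?_) ?_
  · obtain ⟨ι, _, z, w, hzK, hz, hw₀, hw₁, rfl⟩ := eq_pos_convex_span_of_mem_convexHull hx
    have hcard : Fintype.card ι ≤ n :=
      hz.card_le_finrank_succ.trans (Nat.succ_le_succ (Submodule.finrank_le _))
    let e : ι ⊕ Fin (n - Fintype.card ι) ≃ Fin n :=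
      ((Fintype.equivFin ι).sumCongr (Equiv.refl _)).trans
        (finSumFinEquiv.trans (finCongr (by omega)))
    refine ⟨(Sum.elim w 0 ∘ e.symm, Sum.elim z (fun _ ↦ z₀) ∘ e.symm),
      ⟨⟨fun i ↦ ?_, ?_⟩, fun i _ ↦ ?_⟩, ?_⟩ <;> dsimp only [Function.comp_apply]
    · rcases e.symm i with j | j
      exacts [(hw₀ j).le, le_rfl]
    · rw [e.symm.sum_comp (Sum.elim w 0), Fintype.sum_sum_type]
      simpa using hw₁
    · rcases e.symm i with j | j
      exacts [hzK (mem_range_self j), hz₀]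
    · rw [e.symm.sum_comp fun j ↦ Sum.elim w 0 j • Sum.elim z (fun _ ↦ z₀) j,
        Fintype.sum_sum_type]
      simp
  · rintro _ ⟨⟨w, p⟩, ⟨⟨hw₀, hw₁⟩, hp⟩, rfl⟩
    exact mem_convexHull_of_exists_fintype w p hw₀ hw₁ (fun i ↦ hp i (mem_univ i)) rfl

theorem exists_lt_of_notMem_ball_of_mem_extremePoints {B : Set E} (hBc : IsCompact B)
    (hBconv : Convex ℝ B) {x : E} (hx : x ∈ B.extremePoints ℝ) {ε : ℝ} (hε : 0 < ε) :
    ∃ (l : StrongDual ℝ E) (u : ℝ), u < l x ∧ ∀ w ∈ B \ Metric.ball x ε, l w < u := by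
  set K := B \ Metric.ball x ε
  have hxK : x ∉ convexHull ℝ K := fun hxK ↦
    have hxext : x ∈ (convexHull ℝ K).extremePoints ℝ :=
      inter_extremePoints_subset_extremePoints_of_subset (convexHull_min sdiff_subset hBconv)
        ⟨hxK, hx⟩
    (extremePoints_convexHull_subset hxext).2 (Metric.mem_ball_self hε)
  obtain ⟨l, u, hl, hu⟩ := geometric_hahn_banach_closed_point (convex_convexHull ℝ K)
    (isCompact_convexHull (hBc.diff Metric.isOpen_ball)).isClosed hxK
  exact ⟨l, u, hu, fun w hw ↦ hl w (subset_convexHull ℝ K hw)⟩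

end FiniteDimensional

section InnerProductSpace

variable {F : Type*} [NormedAddCommGroup F] [InnerProductSpace ℝ F]

theorem norm_add_le_norm_iff (a b : F) : ‖a + b‖ ≤ ‖b‖ ↔ ‖a‖ ^ 2 + 2 * ⟪a, b⟫ ≤ 0 := by
  rw [← sq_le_sq₀ (norm_nonneg _) (norm_nonneg _), norm_add_sq_real]
  constructor <;> intro h <;> linarith

theorem norm_add_lt_norm_iff (a b : F) : ‖a + b‖ < ‖b‖ ↔ ‖a‖ ^ 2 + 2 * ⟪a, b⟫ < 0 := by
  rw [← sq_lt_sq₀ (norm_nonneg _) (norm_nonneg _), norm_add_sq_real]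
  constructor <;> intro h <;> linarith

theorem mem_exposedPoints_of_isMaxOn_dist {B : Set F} {y z : F} (hy : y ∈ B)
    (hmax : IsMaxOn (dist · z) B y) : y ∈ B.exposedPoints ℝ := by
  refine ⟨hy, innerSL ℝ (y - z), fun w hw ↦ ?_⟩
  have hwy : ‖w - y‖ ^ 2 + 2 * ⟪w - y, y - z⟫ ≤ 0 := by
    rw [← norm_add_le_norm_iff, sub_add_sub_cancel, ← dist_eq_norm, ← dist_eq_norm]
    exact hmax hw
  rw [real_inner_comm, inner_sub_right] at hwy
  simp only [innerSL_apply_apply]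
  refine ⟨by nlinarith [sq_nonneg ‖w - y‖], fun hge ↦ ?_⟩
  have : ‖w - y‖ ^ 2 ≤ 0 := by linarith
  simpa [sub_eq_zero] using this

theorem extremePoints_subset_closure_exposedPoints [FiniteDimensional ℝ F] {B : Set F}
    (hBc : IsCompact B) (hBconv : Convex ℝ B) :
    B.extremePoints ℝ ⊆ closure (B.exposedPoints ℝ) := by
  intro x hx
  refine Metric.mem_closure_iff.2 fun ε hε ↦ ?_
  obtain ⟨l, u, hux, hl⟩ := exists_lt_of_notMem_ball_of_mem_extremePoints hBc hBconv hx hε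
  have hgap : 0 < l x - u := sub_pos.2 hux
  obtain ⟨R, hR⟩ : ∃ R : ℝ, Metric.diam B ^ 2 < 2 * R * (l x - u) :=
    ⟨(Metric.diam B ^ 2 + 1) / (2 * (l x - u)), by field_simp; linarith⟩
  have hR₀ : 0 < R := by nlinarith [sq_nonneg (Metric.diam B)]
  set z := x - R • (InnerProductSpace.toDual ℝ F).symm l
  obtain ⟨y, hyB, hymax⟩ := hBc.exists_isMaxOn ⟨x, hx.1⟩
    (continuous_id.dist continuous_const : Continuous (dist · z)).continuousOn
  refine ⟨y, mem_exposedPoints_of_isMaxOn_dist hyB hymax, ?_⟩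
  rw [dist_comm]
  by_contra hyx
  have hly : l y < u := hl y ⟨hyB, hyx⟩
  have hdiam : ‖y - x‖ ^ 2 ≤ Metric.diam B ^ 2 := by
    rw [← dist_eq_norm]
    gcongr
    exact Metric.dist_le_diam_of_mem hBc.isBounded hyB hx.1
  have hyz : dist y z < dist x z := by
    rw [dist_eq_norm, dist_eq_norm, ← sub_add_sub_cancel y x z, norm_add_lt_norm_iff,
      sub_sub_cancel, real_inner_smul_right, real_inner_comm,
      InnerProductSpace.toDual_symm_apply, map_sub]
    nlinarith
  exact hyz.not_ge (hymax hx.1)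

end InnerProductSpace

/-- Straszewicz's theorem: for a compact convex `B ⊆ ℝ^m`, the exposed points
are dense in the extreme points. -/
theorem stmt1 {m : ℕ} (B : Set (EuclideanSpace ℝ (Fin m)))
    (hBc : IsCompact B) (hBconv : Convex ℝ B) :
    B.extremePoints ℝ ⊆ closure (B.exposedPoints ℝ) :=
  extremePoints_subset_closure_exposedPoints hBc hBconv
end

section
/- Let K ⊆ ℝ^n be compact. Then the cone R_{2d}(K) of linear functionals on ℝ[x]_{2d} representable by integration against a finite Borel measure supported on K equals the conical hull of the set of point-evaluation functionals {ℓ_v : v ∈ K}. -/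
open MeasureTheory

/-- The space of truncated moment sequences: real sequences indexed by monomials
(exponent vectors) of total degree at most `d` in `n` variables; this is the
(coordinatized) dual space `ℝ[x]_d^*`. -/
abbrev MomSpace (n d : ℕ) := {α : Fin n →₀ ℕ // (α.sum fun _ e => e) ≤ d} → ℝ

/-- Evaluation of the monomial `x^α` at the point `v`. -/
def evalMono {n : ℕ} (v : Fin n → ℝ) (α : Fin n →₀ ℕ) : ℝ :=
  α.prod fun i k => v i ^ k

/-- The point-evaluation functional `ℓ_v` on `ℝ[x]_d`, in moment coordinates. -/
def Lmap (n d : ℕ) (v : Fin n → ℝ) : MomSpace n d := fun α => evalMono v α.1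

/-- The pairing `⟨p, y⟩` between a polynomial `p` (of degree ≤ d) and a moment
sequence `y`; it equals `ℓ(p)` for the functional `ℓ` with moments `y`. -/
noncomputable def momPair {n d : ℕ} (y : MomSpace n d)
    (p : MvPolynomial (Fin n) ℝ) : ℝ :=
  ∑ α ∈ p.support, p.coeff α *
    (if h : (α.sum fun _ e => e) ≤ d then y ⟨α, h⟩ else 0)

/-- The conical hull of a set: all finite nonnegative combinations. -/
def conicalHull {V : Type*} [AddCommMonoid V] [Module ℝ V] (s : Set V) : Set V :=
  {y | ∃ (k : ℕ) (c : Fin k → ℝ) (z : Fin k → V),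
    (∀ i, 0 ≤ c i) ∧ (∀ i, z i ∈ s) ∧ y = ∑ i, c i • z i}

/-- The cone `R_{2d}(K)` of moment sequences representable by a finite Borel
measure supported on `K`. -/
def RepCone (n d : ℕ) (K : Set (Fin n → ℝ)) : Set (MomSpace n d) :=
  {y | ∃ σ : Measure (Fin n → ℝ), IsFiniteMeasure σ ∧ σ Kᶜ = 0 ∧
    ∀ α : {α : Fin n →₀ ℕ // (α.sum fun _ e => e) ≤ d},
      y α = ∫ v in K, evalMono v α.1 ∂σ}

/-! The moment vector of `σ` is the integral `∫_K ℓ_v dσ(v)` of the continuous map `v ↦ ℓ_v`.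
Normalised by `σ(K)`, it is the barycentre of a probability measure carried by the compact set
`{ℓ_v : v ∈ K}`, so it lies in the closed convex hull of that set; in finite dimension this is
the convex hull itself, which Carathéodory's theorem shows to be compact. Conversely, the
nonnegative combination `∑ cᵢ ℓ_{vᵢ}` is the moment vector of `∑ cᵢ δ_{vᵢ}`. -/
noncomputable instance fintypeBoundedDegree {σ : Type*} [Finite σ] (d : ℕ) :
    Fintype {α : σ →₀ ℕ // (α.sum fun _ e => e) ≤ d} :=
  (Finsupp.finite_of_degree_le d).fintype

theorem continuous_evalMono {n : ℕ} (α : Fin n →₀ ℕ) :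
    Continuous fun v : Fin n → ℝ => evalMono v α :=
  continuous_finsetProd _ fun i _ => (continuous_apply i).pow _

theorem continuous_Lmap (n d : ℕ) : Continuous (Lmap n d) :=
  continuous_pi fun α => continuous_evalMono α.1

section ConicalHull

variable {V : Type*} [AddCommMonoid V] [Module ℝ V] {s : Set V}

theorem sum_smul_mem_conicalHull {ι : Type*} [Fintype ι] {c : ι → ℝ} {z : ι → V}
    (hc : ∀ i, 0 ≤ c i) (hz : ∀ i, z i ∈ s) : ∑ i, c i • z i ∈ conicalHull s := by
  let e := Fintype.equivFin ι
  exact ⟨_, c ∘ e.symm, z ∘ e.symm, fun _ => hc _, fun _ => hz _,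
    (e.symm.sum_comp fun i => c i • z i).symm⟩

theorem zero_mem_conicalHull : (0 : V) ∈ conicalHull s :=
  ⟨0, Fin.elim0, Fin.elim0, fun i => i.elim0, fun i => i.elim0, by simp⟩

end ConicalHull

theorem smul_mem_conicalHull_of_mem_convexHull {V : Type*} [AddCommGroup V] [Module ℝ V]
    {s : Set V} {c : ℝ} (hc : 0 ≤ c) {x : V} (hx : x ∈ convexHull ℝ s) :
    c • x ∈ conicalHull s := by
  obtain ⟨ι, _, w, z, hw₀, -, hz, rfl⟩ := mem_convexHull_iff_exists_fintype.1 hx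
  rw [Finset.smul_sum]
  simp_rw [smul_smul]
  exact sum_smul_mem_conicalHull (fun i => mul_nonneg hc (hw₀ i)) hz

section Caratheodory

variable {E : Type*} [NormedAddCommGroup E] [NormedSpace ℝ E]

theorem convexHull_eq_biUnion_image_stdSimplex [FiniteDimensional ℝ E] (s : Set E) :
    convexHull ℝ s = ⋃ k ∈ Finset.range (Module.finrank ℝ E + 2),
      (fun p : (Fin k → ℝ) × (Fin k → E) => ∑ i, p.1 i • p.2 i) ''
        (stdSimplex ℝ (Fin k) ×ˢ Set.univ.pi fun _ => s) := by
  refine subset_antisymm (fun x hx => ?_) (Set.iUnion₂_subset fun k _ => ?_)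
  · obtain ⟨ι, _, z, w, hzs, hind, hw₀, hw₁, rfl⟩ := eq_pos_convex_span_of_mem_convexHull hx
    have hcard : Fintype.card ι < Module.finrank ℝ E + 2 :=
      Nat.lt_succ_of_le <| hind.card_le_finrank_succ.trans <|
        Nat.succ_le_succ (Submodule.finrank_le _)
    let e := Fintype.equivFin ι
    refine Set.mem_biUnion (Finset.mem_range.2 hcard)
      ⟨(w ∘ e.symm, z ∘ e.symm), ⟨⟨fun _ => (hw₀ _).le, ?_⟩, fun _ _ => hzs ⟨_, rfl⟩⟩, ?_⟩
    · exact (e.symm.sum_comp w).trans hw₁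
    · exact e.symm.sum_comp fun i => w i • z i
  · rintro _ ⟨⟨w, z⟩, ⟨⟨hw₀, hw₁⟩, hz⟩, rfl⟩
    exact (convex_convexHull ℝ s).sum_mem (fun i _ => hw₀ i) hw₁
      fun i _ => subset_convexHull ℝ s (hz i (Set.mem_univ i))

theorem IsCompact.convexHull [FiniteDimensional ℝ E] {s : Set E} (hs : IsCompact s) :
    IsCompact (convexHull ℝ s) := by
  rw [convexHull_eq_biUnion_image_stdSimplex]
  refine (Finset.range _).isCompact_biUnion fun k _ => ?_
  refine ((isCompact_stdSimplex (𝕜 := ℝ) (ι := Fin k)).prod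
    (isCompact_univ_pi fun _ => hs)).image ?_
  exact continuous_finsetSum _ fun i _ =>
    ((continuous_apply i).comp continuous_fst).smul ((continuous_apply i).comp continuous_snd)

end Caratheodory

theorem integral_mem_conicalHull {X E : Type*} [MeasurableSpace X] [NormedAddCommGroup E]
    [NormedSpace ℝ E] [FiniteDimensional ℝ E] {μ : Measure X} [IsFiniteMeasure μ]
    {f : X → E} {s : Set E} (hs : IsCompact s) (hfs : ∀ᵐ x ∂μ, f x ∈ s)
    (hf : Integrable f μ) : ∫ x, f x ∂μ ∈ conicalHull s := by
  rcases eq_zero_or_neZero μ with rfl | _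
  · simpa using zero_mem_conicalHull
  rw [← measure_smul_average]
  exact smul_mem_conicalHull_of_mem_convexHull measureReal_nonneg <|
    (convex_convexHull ℝ s).average_mem hs.convexHull.isClosed
      (hfs.mono fun _ hx => subset_convexHull ℝ s hx) hf

theorem integral_sum_smul_dirac {X E ι : Type*} [MeasurableSpace X] [MeasurableSingletonClass X]
    [NormedAddCommGroup E] [NormedSpace ℝ E] [CompleteSpace E] [Fintype ι] (c : ι → NNReal)
    (v : ι → X) (f : X → E) :
    ∫ x, f x ∂(∑ i, c i • Measure.dirac (v i)) = ∑ i, (c i : ℝ) • f (v i) := by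
  rw [integral_finsetSum_measure fun i _ => (integrable_dirac enorm_lt_top).smul_measure
    ENNReal.coe_ne_top]
  simp only [integral_smul_nnreal_measure, integral_dirac, NNReal.smul_def]

theorem repCone_subset_conicalHull {n d : ℕ} {K : Set (Fin n → ℝ)} (hK : IsCompact K) :
    RepCone n d K ⊆ conicalHull (Lmap n d '' K) := by
  rintro y ⟨σ, _, -, hmom⟩
  have hint : Integrable (Lmap n d) (σ.restrict K) :=
    (continuous_Lmap n d).continuousOn.integrableOn_compact hK
  have hy : y = ∫ v in K, Lmap n d v ∂σ :=
    funext fun α => (hmom α).trans (eval_integral (fun α => hint.eval α) α).symm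
  rw [hy]
  exact integral_mem_conicalHull (hK.image (continuous_Lmap n d))
    ((ae_restrict_mem hK.measurableSet).mono fun v hv => ⟨v, hv, rfl⟩) hint

theorem conicalHull_subset_repCone {n d : ℕ} {K : Set (Fin n → ℝ)} :
    conicalHull (Lmap n d '' K) ⊆ RepCone n d K := by
  rintro _ ⟨k, c, z, hc, hz, rfl⟩
  choose v hvK hvz using hz
  let σ : Measure (Fin n → ℝ) := ∑ i, (c i).toNNReal • Measure.dirac (v i)
  have hσK : σ Kᶜ = 0 := by
    simp [σ, Measure.finsetSum_apply, hvK]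
  refine ⟨σ, inferInstance, hσK, fun α => ?_⟩
  rw [Measure.restrict_eq_self_of_ae_mem hσK, integral_sum_smul_dirac]
  simp [← hvz, Lmap, Real.coe_toNNReal _ (hc _)]

/-- Lemma 3.1: for `K ⊆ ℝ^n` compact, the cone of moment sequences representable by a
finite Borel measure on `K` equals the conical hull of the point evaluations
`{ℓ_v : v ∈ K}`. -/
theorem stmt11 {n d : ℕ} (K : Set (Fin n → ℝ)) (hK : IsCompact K) :
    RepCone n (2 * d) K = conicalHull (Lmap n (2 * d) '' K) :=
  (repCone_subset_conicalHull hK).antisymm conicalHull_subset_repCone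
end
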